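/- Let ℓ : ℝ × {-1,0,1} → ℝ be a loss satisfying the symmetry condition Σ_{y} ℓ(z, y) = C for all z, where the sum is over y ∈ {-1,0,1} and C is a constant. Suppose labels are corrupted by flipping with a constant noise rate η < 2/3: the noisy label ỹ equals the clean label y with probability 1 − η and equals each of the other two classes with probability η/2. Then the noisy expected risk satisfies R_noisy(f) = (1 − 3η/2)·R_clean(f) + (η/2)·C, so any minimizer of the clean risk is also a minimizer of the noisy risk. -/

import Mathlib

open MeasureTheory

/-- Noise tolerance of symmetric losses with three classes under symmetric
label noise with constant rate `η < 2/3`.  The noisy risk is defined as the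
expected loss when the noisy label equals the clean label with probability
`1 - η` and each of the other two classes with probability `η / 2`. -/
theorem symmetric_loss_noise_tolerance
    {Ω : Type*} [MeasurableSpace Ω] (μ : Measure Ω) [IsProbabilityMeasure μ]
    {F : Type*} (Z : F → Ω → ℝ) (Y : Ω → ℝ)
    (hY : ∀ ω, Y ω = -1 ∨ Y ω = 0 ∨ Y ω = 1)
    (ℓ : ℝ → ℝ → ℝ) (C : ℝ)
    (hsym : ∀ z : ℝ, ℓ z (-1) + ℓ z 0 + ℓ z 1 = C)
    (η : ℝ) (hη0 : 0 ≤ η) (hη : η < 2 / 3)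
    (hint : ∀ f : F, Integrable (fun ω => ℓ (Z f ω) (Y ω)) μ)
    (Rclean Rnoisy : F → ℝ)
    (hRclean : ∀ f, Rclean f = ∫ ω, ℓ (Z f ω) (Y ω) ∂μ)
    (hRnoisy : ∀ f, Rnoisy f = ∫ ω,
      ((1 - η) * ℓ (Z f ω) (Y ω)
        + (η / 2) * ((ℓ (Z f ω) (-1) + ℓ (Z f ω) 0 + ℓ (Z f ω) 1)
            - ℓ (Z f ω) (Y ω))) ∂μ) :
    (∀ f, Rnoisy f = (1 - 3 * η / 2) * Rclean f + (η / 2) * C) ∧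
    (∀ f : F, (∀ g : F, Rclean f ≤ Rclean g) →
      (∀ g : F, Rnoisy f ≤ Rnoisy g)) := by
  have key : ∀ f, Rnoisy f = (1 - 3 * η / 2) * Rclean f + (η / 2) * C := by
    intro f
    have heq : ∀ ω, ((1 - η) * ℓ (Z f ω) (Y ω)
        + (η / 2) * ((ℓ (Z f ω) (-1) + ℓ (Z f ω) 0 + ℓ (Z f ω) 1)
            - ℓ (Z f ω) (Y ω)))
        = (1 - 3 * η / 2) * ℓ (Z f ω) (Y ω) + (η / 2) * C := by
      intro ω; rw [hsym]; ring
    rw [hRnoisy, hRclean]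
    simp only [heq]
    rw [integral_add ((hint f).const_mul _) (integrable_const _),
      integral_const_mul, integral_const]
    simp
  refine ⟨key, fun f hf g => ?_⟩
  rw [key f, key g]
  have h32 : 0 < 1 - 3 * η / 2 := by linarith
  have := hf g
  nlinarith
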